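/- Let T' = #·T·$ with sentinels #, $ ∉ Σ, and let W be a nonempty string over Σ that is right-maximal in T'. Among the proper suffixes W' of W whose number of occurrences in T' is strictly greater than that of W, let W* be a longest one (such a suffix exists, e.g. the empty string qualifies). Then W* is a maximal repeat of T'. -/

import Mathlib

/-- Number of (factor) occurrences of `W` in `T`: the number of starting
positions `i` such that `W` is a prefix of `T.drop i`. -/
def occ {α : Type*} [DecidableEq α] (T W : List α) : ℕ :=
  (List.range (T.length + 1)).countP fun i => decide (W <+: T.drop i)

/-- `W` is right-maximal in `T`: at least two distinct right extensions occur. -/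
def rightMax {α : Type*} (T W : List α) : Prop :=
  ∃ b c, b ≠ c ∧ (W ++ [b]) <:+: T ∧ (W ++ [c]) <:+: T

/-- `W` is left-maximal in `T`: at least two distinct left extensions occur. -/
def leftMax {α : Type*} (T W : List α) : Prop :=
  ∃ a c, a ≠ c ∧ (a :: W) <:+: T ∧ (c :: W) <:+: T

/-!
A proper suffix `W'` of `W` inherits the right extensions of `W`, so it is right-maximal. If it
were not left-maximal, every occurrence of `W'` (none of which can start at the sentinel `#`)
would be preceded by the same letter `a`, namely the letter before `W'` in `W`; then `a W'` is a
longer proper suffix of `W` occurring as often as `W'`, contradicting the choice of `W'`.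
-/

namespace List

variable {α : Type*}

theorem IsSuffix.exists_cons_isSuffix {W' W : List α} (h : W' <:+ W) (hne : W' ≠ W) :
    ∃ a, a :: W' <:+ W := by
  obtain ⟨V, rfl⟩ := h
  obtain rfl | ⟨V₀, a, rfl⟩ := V.eq_nil_or_concat
  · exact absurd rfl hne
  · exact ⟨a, V₀, by simp⟩

end List

section Occurrences

variable {α : Type*}

theorem rightMax_of_isSuffix {T W W' : List α} (hrm : rightMax T W) (hsuf : W' <:+ W) :
    rightMax T W' := by
  obtain ⟨b, c, hbc, hb, hc⟩ := hrm
  have extend : ∀ d, (W' ++ [d]) <:+: W ++ [d] := fun d => by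
    obtain ⟨V, rfl⟩ := hsuf
    exact (List.suffix_append V _).isInfix.trans (by simp)
  exact ⟨b, c, hbc, (extend b).trans hb, (extend c).trans hc⟩

theorem leftMax_nil {T : List α} {x y : α} (hx : x ∈ T) (hy : y ∈ T) (hxy : x ≠ y) :
    leftMax T [] :=
  ⟨x, y, hxy, (List.singleton_infix_iff x T).2 hx, (List.singleton_infix_iff y T).2 hy⟩

variable [DecidableEq α]

theorem occ_cons (x : α) (T U : List α) :
    occ (x :: T) U = occ T U + if U <+: x :: T then 1 else 0 := by
  simp only [occ, List.length_cons, List.range_succ_eq_map (n := T.length + 1),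
    List.countP_cons, List.countP_map, List.drop_zero, Function.comp_def, List.drop_succ_cons,
    decide_eq_true_eq]

/-- The summand counts the occurrence of `U` at position `0`, which has no letter before it. -/
theorem occ_le_occ_cons_add {a : α} {U : List α} :
    ∀ {T : List α}, (∀ c, c :: U <:+: T → c = a) →
      occ T U ≤ occ T (a :: U) + if U <+: T then 1 else 0
  | [], _ => by simp [occ]
  | x :: T, hleft => by
    have ih := occ_le_occ_cons_add fun c hc => hleft c (hc.trans (List.suffix_cons x T).isInfix)
    have hpre : U <+: T → a :: U <+: x :: T := fun hU => by
      have hx : x = a := hleft x ((List.prefix_cons_inj x).2 hU).isInfix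
      exact hx ▸ (List.prefix_cons_inj x).2 hU
    have hstart : (if U <+: T then 1 else 0) ≤ if a :: U <+: x :: T then 1 else 0 := by
      split_ifs with hU <;> simp_all
    rw [occ_cons, occ_cons]
    omega

end Occurrences

theorem longest_more_frequent_suffix_is_maximal_repeat_general {α : Type*}
    [DecidableEq α] (T W W' : List α) (hash dol : α)
    (hhd : hash ≠ dol)
    (hWsig : ∀ x ∈ W, x ≠ hash ∧ x ≠ dol)
    (hrm : rightMax (hash :: T ++ [dol]) W)
    (hsuf : W' <:+ W) (hne : W' ≠ W)
    (hmore : occ (hash :: T ++ [dol]) W < occ (hash :: T ++ [dol]) W')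
    (hlongest : ∀ W'' : List α, W'' <:+ W → W'' ≠ W →
      occ (hash :: T ++ [dol]) W < occ (hash :: T ++ [dol]) W'' →
      W''.length ≤ W'.length) :
    leftMax (hash :: T ++ [dol]) W' ∧ rightMax (hash :: T ++ [dol]) W' := by
  refine ⟨?_, rightMax_of_isSuffix hrm hsuf⟩
  rcases W' with _ | ⟨w, V⟩
  · exact leftMax_nil (by simp) (by simp) hhd
  obtain ⟨a, haW⟩ := hsuf.exists_cons_isSuffix hne
  have hW : W <:+: hash :: T ++ [dol] := by
    obtain ⟨b, -, -, hb, -⟩ := hrm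
    exact (List.prefix_append W [b]).isInfix.trans hb
  by_contra hleft
  have hunique : ∀ c, c :: w :: V <:+: hash :: T ++ [dol] → c = a := fun c hc => by
    by_contra hca
    exact hleft ⟨a, c, Ne.symm hca, haW.isInfix.trans hW, hc⟩
  have hnotpre : ¬ w :: V <+: hash :: T ++ [dol] := fun h =>
    (hWsig w (hsuf.subset (by simp))).1 (List.cons_prefix_cons.1 h).1
  have hocc := occ_le_occ_cons_add hunique
  rw [if_neg hnotpre, add_zero] at hocc
  have hmore' := hmore.trans_le hocc
  have hlen := hlongest _ haW (fun h => (h ▸ hmore').false) hmore'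
  simp at hlen

/-- with `T' = # · T · $` and `W` nonempty over `Σ` and
right-maximal in `T'`, a longest proper suffix of `W` with strictly more
occurrences than `W` is a maximal repeat of `T'`. -/
theorem longest_more_frequent_suffix_is_maximal_repeat {α : Type*}
    [DecidableEq α] (T W W' : List α) (hash dol : α)
    (hh : hash ∉ T) (hd : dol ∉ T) (hhd : hash ≠ dol)
    (hW : W ≠ []) (hWsig : ∀ x ∈ W, x ≠ hash ∧ x ≠ dol)
    (hrm : rightMax (hash :: T ++ [dol]) W)
    (hsuf : W' <:+ W) (hne : W' ≠ W)
    (hmore : occ (hash :: T ++ [dol]) W < occ (hash :: T ++ [dol]) W')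
    (hlongest : ∀ W'' : List α, W'' <:+ W → W'' ≠ W →
      occ (hash :: T ++ [dol]) W < occ (hash :: T ++ [dol]) W'' →
      W''.length ≤ W'.length) :
    leftMax (hash :: T ++ [dol]) W' ∧ rightMax (hash :: T ++ [dol]) W' :=
  longest_more_frequent_suffix_is_maximal_repeat_general T W W' hash dol hhd hWsig hrm hsuf hne
    hmore hlongest
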